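/- Fix ℏ ∈ ℂ with ℏ ≠ 0 and N ∈ ℂ. For every j ∈ ℤ the identity f_j(u) = (j−N)·ℏ·u·f_{j+1}(u) + f_{j+2}(u) holds in ℂ[[u]]. Equivalently, the Kac–Schwarz operator b = multiplication by λ² acts on the basis vectors by b·Φ_j^{(N)} = (j−N)·ℏ·Φ_{j+1}^{(N)} + Φ_{j+2}^{(N)}; in terms of coefficients this is the identity a_k(x+2) = a_k(x) + 16·k·x·a_{k−1}(x+1), valid for all integers k ≥ 1 and all x ∈ ℂ. -/
import Mathlib


noncomputable section

namespace BGWKS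

/-- Formal derivative of a one-variable formal power series. -/
def d (g : PowerSeries ℂ) : PowerSeries ℂ := PowerSeries.derivative ℂ g

/-- `a_k(x) = Π_{i=1}^{k} (4(x−1)² − (2i−1)²)`, with `a_0(x) = 1`. -/
def aP (k : ℕ) (x : ℂ) : ℂ := ∏ i ∈ Finset.range k, (4*(x-1)^2 - ((2*i+1 : ℕ) : ℂ)^2)

/-- The series `f_j(u) = Σ_k ((−ℏ)^k·a_k(j−N)/(16^k·k!))·u^k` encoding the basis vector
`Φ_j^{(N)}(λ) = λ^{j−1}·f_j(1/λ)` of the generalized BGW point of the Sato Grassmannian. -/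
def f (ℏ N : ℂ) (j : ℤ) : PowerSeries ℂ :=
  PowerSeries.mk fun k => (-ℏ)^k * aP k ((j : ℂ) - N) / (16^k * (Nat.factorial k : ℂ))

lemma aP_succ (k : ℕ) (x : ℂ) :
    aP (k+1) x = aP k x * (4*(x-1)^2 - ((2*k+1 : ℕ) : ℂ)^2) := by
  simp [aP, Finset.prod_range_succ]

lemma lem1 : ∀ (k : ℕ) (x : ℂ), aP (k+1) x = aP k (x+1) * (4*(x-(k+1))^2-1) := by
  intro k
  induction k with
  | zero => intro x; simp [aP, Finset.prod_range_one]
  | succ n ih =>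
    intro x
    rw [aP_succ (n+1) x, ih, aP_succ n (x+1)]
    push_cast
    ring

lemma lem2 : ∀ (k : ℕ) (x : ℂ),
    aP (k+1) (x+2) = aP (k+1) x + 16*((k+1:ℕ) : ℂ)*x*aP k (x+1) := by
  intro k
  induction k with
  | zero => intro x; simp [aP, Finset.prod_range_one]; ring
  | succ n ih =>
    intro x
    rw [aP_succ (n+1) (x+2), ih, lem1 n x, lem1 (n+1) x, aP_succ n (x+1)]
    push_cast
    ring

lemma key (ℏ x : ℂ) (n : ℕ) :
    (-ℏ)^(n+1) * aP (n+1) x / (16^(n+1) * (Nat.factorial (n+1) : ℂ)) =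
    x * ℏ * ((-ℏ)^n * aP n (x+1) / (16^n * (Nat.factorial n : ℂ))) +
    (-ℏ)^(n+1) * aP (n+1) (x+2) / (16^(n+1) * (Nat.factorial (n+1) : ℂ)) := by
  rw [lem2 n x, Nat.factorial_succ]
  have hf : ((Nat.factorial n : ℂ)) ≠ 0 := Nat.cast_ne_zero.mpr (Nat.factorial_ne_zero _)
  have hn1 : ((n:ℂ) + 1) ≠ 0 := Nat.cast_add_one_ne_zero n
  have h16 : (16:ℂ) ≠ 0 := by norm_num
  push_cast
  field_simp
  ring

end BGWKS

open BGWKS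

/-- the Kac–Schwarz operator `b = λ²` acts on the basis vectors by
`b·Φ_j^{(N)} = (j−N)·ℏ·Φ_{j+1}^{(N)} + Φ_{j+2}^{(N)}`, i.e.
`f_j(u) = (j−N)·ℏ·u·f_{j+1}(u) + f_{j+2}(u)`; in terms of coefficients this is
`a_k(x+2) = a_k(x) + 16·k·x·a_{k−1}(x+1)` for `k ≥ 1`. -/
theorem kac_schwarz_b_action (ℏ N : ℂ) (hℏ : ℏ ≠ 0) :
    (∀ j : ℤ, f ℏ N j =
      (((j : ℂ) - N) * ℏ) • (PowerSeries.X * f ℏ N (j+1)) + f ℏ N (j+2)) ∧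
    (∀ k : ℕ, 1 ≤ k → ∀ x : ℂ,
      aP k (x+2) = aP k x + 16*(k : ℂ)*x*aP (k-1) (x+1)) := by
  constructor
  · intro j
    ext k
    rcases k with _ | n
    · simp [f, aP, PowerSeries.coeff_smul]
    · have hx : ((j+2 : ℤ) : ℂ) - N = ((j : ℂ) - N) + 2 := by push_cast; ring
      have hx1 : ((j+1 : ℤ) : ℂ) - N = ((j : ℂ) - N) + 1 := by push_cast; ring
      simp only [map_add, PowerSeries.coeff_smul, PowerSeries.coeff_succ_X_mul,
        f, PowerSeries.coeff_mk, hx, hx1, smul_eq_mul]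
      rw [key ℏ ((j:ℂ) - N) n]
  · intro k hk x
    match k, hk with
    | n + 1, _ => simpa using lem2 n x
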